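/- Let f1, f2, f3 be elements of the polynomial ring ℂ[p1,p2,p3,p4,t1,w,...] such that the row vector (f1, f2, f3) multiplied by the matrix h'(M) (the matrix M after substituting u = w·p1 + w²·p2, v = w·p3 + w²·p4, t2 = w³ + t1·w) is the zero vector. Then f2 = w·f1 and f3 = w²·f1. -/
import Mathlib


open MvPolynomial

lemma keylem {R : Type*} [CommRing R] [IsDomain R] {c d : R} (hc : c ≠ 0)
    {A B : Polynomial R}
    (h : A ^ 2 * (Polynomial.X + Polynomial.C d) + B ^ 2 = Polynomial.C c * A * B) :
    A = 0 ∧ B = 0 := by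
  by_cases hA : A = 0
  · subst hA
    simp only [ne_eq, OfNat.ofNat_ne_zero, not_false_eq_true, zero_pow, zero_mul, zero_add,
      mul_zero] at h
    exact ⟨rfl, by simpa [pow_eq_zero_iff] using h⟩
  by_cases hB : B = 0
  · subst hB
    simp only [ne_eq, OfNat.ofNat_ne_zero, not_false_eq_true, zero_pow, add_zero, mul_zero] at h
    exfalso
    rcases mul_eq_zero.mp h with h' | h'
    · exact hA (pow_eq_zero_iff two_ne_zero |>.mp h')
    · exact (Polynomial.monic_X_add_C d).ne_zero h'
  exfalso
  have hC : Polynomial.C c ≠ 0 := Polynomial.C_ne_zero.mpr hc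
  have h1 : (A ^ 2 * (Polynomial.X + Polynomial.C d)).natDegree = 2 * A.natDegree + 1 := by
    rw [Polynomial.natDegree_mul (pow_ne_zero _ hA) (Polynomial.monic_X_add_C d).ne_zero,
      Polynomial.natDegree_pow, Polynomial.natDegree_X_add_C]
  have h2 : (B ^ 2).natDegree = 2 * B.natDegree := by
    rw [Polynomial.natDegree_pow]
  have h3 : (Polynomial.C c * A * B).natDegree = A.natDegree + B.natDegree := by
    rw [Polynomial.natDegree_mul (mul_ne_zero hC hA) hB,
      Polynomial.natDegree_mul hC hA, Polynomial.natDegree_C]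
    omega
  have hdeg : (A ^ 2 * (Polynomial.X + Polynomial.C d) + B ^ 2).natDegree
      = A.natDegree + B.natDegree := by rw [h, h3]
  rcases lt_trichotomy (2 * A.natDegree + 1) (2 * B.natDegree) with hlt | heq | hgt
  · rw [Polynomial.natDegree_add_eq_right_of_natDegree_lt (by rw [h1, h2]; exact hlt), h2] at hdeg
    omega
  · omega
  · rw [Polynomial.natDegree_add_eq_left_of_natDegree_lt (by rw [h1, h2]; exact hgt), h1] at hdeg
    omega


/-- Variables: `0=p1, 1=p2, 2=p3, 3=p4, 4=u, 5=v, 6=t1, 7=t2`. -/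
noncomputable def matM : Matrix (Fin 3) (Fin 6) (MvPolynomial (Fin 8) ℂ) :=
  Matrix.of
    ![![X 4, X 5, -(X 7 * X 1), -(X 7 * X 3), -(X 7 * X 0) + X 6 * X 4, -(X 7 * X 2) + X 6 * X 5],
      ![-(X 0), -(X 2), X 4 + X 6 * X 1, X 5 + X 6 * X 3, -(X 7 * X 1), -(X 7 * X 3)],
      ![-(X 1), -(X 3), -(X 0), -(X 2), X 4, X 5]]

/-- `h'(M)`: the matrix `M` after the substitution `u = w·p1+w²·p2`, `v = w·p3+w²·p4`,
`t2 = w³+t1·w`; entries lie in `S̃ = ℂ[p1,p2,p3,p4,t1,w]` (`0..3 = p1..p4`, `4=t1`, `5=w`). -/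
noncomputable def hM : Matrix (Fin 3) (Fin 6) (MvPolynomial (Fin 6) ℂ) :=
  matM.map (MvPolynomial.aeval
    (![X 0, X 1, X 2, X 3, X 5 * X 0 + X 5 ^ 2 * X 1, X 5 * X 2 + X 5 ^ 2 * X 3, X 4,
      X 5 ^ 3 + X 4 * X 5] : Fin 8 → MvPolynomial (Fin 6) ℂ))

/-- If `(f1 f2 f3) · h'(M) = 0` then `f2 = w·f1` and `f3 = w²·f1`. -/
theorem stmt4 (f1 f2 f3 : MvPolynomial (Fin 6) ℂ)
    (h : Matrix.vecMul ![f1, f2, f3] hM = 0) :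
    f2 = X 5 * f1 ∧ f3 = X 5 ^ 2 * f1 := by
  have e0 := congrFun h 0
  have e2 := congrFun h 2
  have g4 : (![X 0, X 1, X 2, X 3, X 5 * X 0 + X 5 ^ 2 * X 1, X 5 * X 2 + X 5 ^ 2 * X 3, X 4,
      X 5 ^ 3 + X 4 * X 5] : Fin 8 → MvPolynomial (Fin 6) ℂ) 4 = X 5 * X 0 + X 5 ^ 2 * X 1 := rfl
  have g6 : (![X 0, X 1, X 2, X 3, X 5 * X 0 + X 5 ^ 2 * X 1, X 5 * X 2 + X 5 ^ 2 * X 3, X 4,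
      X 5 ^ 3 + X 4 * X 5] : Fin 8 → MvPolynomial (Fin 6) ℂ) 6 = X 4 := rfl
  have g7 : (![X 0, X 1, X 2, X 3, X 5 * X 0 + X 5 ^ 2 * X 1, X 5 * X 2 + X 5 ^ 2 * X 3, X 4,
      X 5 ^ 3 + X 4 * X 5] : Fin 8 → MvPolynomial (Fin 6) ℂ) 7 = X 5 ^ 3 + X 4 * X 5 := rfl
  simp only [hM, matM, Matrix.vecMul, dotProduct, Fin.sum_univ_three, Matrix.map_apply,
    Matrix.cons_val', Matrix.cons_val_zero, Matrix.cons_val_one, Matrix.head_cons,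
    Matrix.empty_val', Matrix.cons_val_fin_one, Matrix.head_fin_const, Matrix.of_apply,
    Matrix.cons_val_two, Matrix.tail_cons, map_add, map_mul, map_neg, aeval_X, g4, g6, g7,
    Pi.zero_apply] at e0 e2
  set a := f2 - X 5 * f1 with ha
  set b := f3 - X 5 ^ 2 * f1 with hb
  have hQ : X 1 * ((X 5 ^ 2 + X 4) * a ^ 2 - X 5 * a * b + b ^ 2) = 0 := by
    rw [ha, hb]
    linear_combination (f2 - X 5 * f1) * e2 + (X 5 * (f2 - X 5 * f1) - (f3 - X 5 ^ 2 * f1)) * e0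
  have hQ0 : (X 5 ^ 2 + X 4) * a ^ 2 - X 5 * a * b + b ^ 2 = 0 := by
    rcases mul_eq_zero.mp hQ with h' | h'
    · exact absurd h' (MvPolynomial.X_ne_zero 1)
    · exact h'
  -- move to Polynomial over MvPolynomial (Fin 5) ℂ, with t1 (index 4) as the polynomial variable
  set σ := (renameEquiv ℂ (Equiv.swap (0 : Fin 6) 4)).trans (finSuccEquiv ℂ 5) with hσ
  have s4 : σ (X 4) = Polynomial.X := by
    simp only [hσ, AlgEquiv.trans_apply, renameEquiv_apply, rename_X, Equiv.swap_apply_right]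
    exact finSuccEquiv_X_zero
  have s5 : σ (X 5) = Polynomial.C (X 4) := by
    have h55 : Equiv.swap (0 : Fin 6) 4 5 = 5 :=
      Equiv.swap_apply_of_ne_of_ne (by decide) (by decide)
    simp only [hσ, AlgEquiv.trans_apply, renameEquiv_apply, rename_X, h55]
    exact finSuccEquiv_X_succ (j := 4)
  have hs := congrArg σ hQ0
  simp only [map_add, map_sub, map_mul, map_pow, map_zero, s4, s5] at hs
  have hkey : σ a ^ 2 * (Polynomial.X + Polynomial.C ((X 4 : MvPolynomial (Fin 5) ℂ) ^ 2))
      + σ b ^ 2 = Polynomial.C (X 4) * σ a * σ b := by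
    rw [Polynomial.C_pow]
    linear_combination hs
  obtain ⟨hA, hB⟩ := keylem (MvPolynomial.X_ne_zero 4) hkey
  have ha0 : a = 0 := σ.injective (by rw [hA, map_zero])
  have hb0 : b = 0 := σ.injective (by rw [hB, map_zero])
  exact ⟨sub_eq_zero.mp ha0, sub_eq_zero.mp hb0⟩
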